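/- arXiv:1505.07203 — 4 statements merged into one kernel-verified Lean document; each statement's English description precedes it below -/
import Mathlib

section
/- For any connected complete hierarchy H of depth |E| on the vertex set of a finite connected graph G, the quasi-flat zones hierarchy of G for the saliency map Φ(H) equals H, i.e., QFZ(G, Φ(H)) = H. -/
open SimpleGraph

variable {V : Type*}

/-- `P'` refines `P`: every region of `P'` is contained in a region of `P`. -/
def Refines (P' P : Set (Set V)) : Prop := ∀ R ∈ P', ∃ S ∈ P, R ⊆ S

/-- `x` and `y` lie in the same region of `P`. -/
def SameRegion (P : Set (Set V)) (x y : V) : Prop := ∃ R ∈ P, x ∈ R ∧ y ∈ R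

/-- The cut of a partition `P` for the graph `G`. -/
def cutOf (G : SimpleGraph V) (P : Set (Set V)) : Set (Sym2 V) :=
  {e | e ∈ G.edgeSet ∧ ∀ x y : V, e = s(x, y) → ¬ SameRegion P x y}

/-- The `lam`-level partition of a subgraph `X`: connected components of the
`lam`-level graph `(V(X), {u ∈ E(X) : w u < lam})`, as a set of regions. -/
def levelPartition {G : SimpleGraph V} (X : G.Subgraph) {α : Type*} [LT α]
    (w : Sym2 V → α) (lam : α) : Set (Set V) :=
  {S | ∃ x ∈ X.verts,
    S = {y | Relation.ReflTransGen (fun a b => X.Adj a b ∧ w s(a, b) < lam) x y}}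

/-- The `lam`-level partition of the graph `G` itself (quasi-flat zones at level `lam`). -/
def qfz (G : SimpleGraph V) (w : Sym2 V → ℕ) (lam : ℕ) : Set (Set V) :=
  {S | ∃ x : V,
    S = {y | Relation.ReflTransGen (fun a b => G.Adj a b ∧ w s(a, b) < lam) x y}}

/-- `(P₀, …, P_l)` is a complete hierarchy on `V`. -/
def IsCompleteHierarchy (P : ℕ → Set (Set V)) (l : ℕ) : Prop :=
  (∀ i ≤ l, Setoid.IsPartition (P i)) ∧
  (∀ i, 1 ≤ i → i ≤ l → Refines (P (i - 1)) (P i)) ∧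
  (P 0 = {S | ∃ x : V, S = {x}}) ∧
  (P l = {Set.univ})

/-- A complete hierarchy all of whose regions induce connected subgraphs of `G`. -/
def IsConnectedHierarchy (G : SimpleGraph V) (P : ℕ → Set (Set V)) (l : ℕ) : Prop :=
  IsCompleteHierarchy P l ∧ ∀ i ≤ l, ∀ S ∈ P i, (G.induce S).Connected

/-- The saliency map of the hierarchy `(P₀, …, P_l)`:
`Φ(H)(u) = max {lam ≤ l : u ∈ φ(P lam)}`. -/
noncomputable def saliency (G : SimpleGraph V) (P : ℕ → Set (Set V)) (l : ℕ)
    (e : Sym2 V) : ℕ :=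
  sSup {lam | lam ≤ l ∧ e ∈ cutOf G (P lam)}

/-- `w` is a saliency map on `G`: the saliency map of some connected complete
hierarchy of depth `|E|`. -/
def IsSaliencyMap (G : SimpleGraph V) [Fintype G.edgeSet] (w : Sym2 V → ℕ) : Prop :=
  ∃ P : ℕ → Set (Set V), IsConnectedHierarchy G P G.edgeFinset.card ∧
    ∀ e ∈ G.edgeSet, w e = saliency G P G.edgeFinset.card e

/-- Total weight of a subgraph. -/
noncomputable def sgWeight [Fintype V] {G : SimpleGraph V} {α : Type*}
    [AddCommMonoid α] (X : G.Subgraph) (w : Sym2 V → α) : α :=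
  ∑ e ∈ (Set.toFinite X.edgeSet).toFinset, w e

/-- `X` is a minimum spanning tree of `(G, w)`. -/
def IsMST [Fintype V] {G : SimpleGraph V} {α : Type*} [AddCommMonoid α] [Preorder α]
    (X : G.Subgraph) (w : Sym2 V → α) : Prop :=
  X.verts = Set.univ ∧ X.Connected ∧
  ∀ Y : G.Subgraph, Y.verts = Set.univ → Y.Connected → sgWeight X w ≤ sgWeight Y w

lemma sameRegion_symm {P : Set (Set V)} {x y : V} (h : SameRegion P x y) :
    SameRegion P y x := by
  obtain ⟨R, hR, hx, hy⟩ := h; exact ⟨R, hR, hy, hx⟩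

lemma not_mem_cut_iff {G : SimpleGraph V} {P : Set (Set V)} {a b : V} (hab : G.Adj a b) :
    s(a, b) ∉ cutOf G P ↔ SameRegion P a b := by
  constructor
  · intro h
    simp only [cutOf, Set.mem_setOf_eq, not_and, not_forall] at h
    obtain ⟨x, y, hxy, hs⟩ := h (G.mem_edgeSet.mpr hab)
    rw [not_not] at hs
    rcases Sym2.eq_iff.mp hxy with ⟨rfl, rfl⟩ | ⟨rfl, rfl⟩
    · exact hs
    · exact sameRegion_symm hs
  · intro h hmem
    exact hmem.2 a b rfl h

lemma sameRegion_mono {P : ℕ → Set (Set V)} {l : ℕ}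
    (href : ∀ i, 1 ≤ i → i ≤ l → Refines (P (i - 1)) (P i)) {i : ℕ}
    {x y : V} (h : SameRegion (P i) x y) :
    ∀ j, i ≤ j → j ≤ l → SameRegion (P j) x y := by
  intro j
  induction j with
  | zero => intro h0 _; rwa [Nat.le_zero.mp h0] at h
  | succ j ih =>
    intro hij hjl
    rcases Nat.lt_or_ge j i with hlt | hge
    · have : i = j + 1 := le_antisymm hij hlt
      rwa [this] at h
    · have hs : SameRegion (P j) x y := ih hge (le_trans (Nat.le_succ j) hjl)
      obtain ⟨R, hR, hx, hy⟩ := hs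
      obtain ⟨S, hS, hRS⟩ := href (j + 1) (Nat.succ_le_succ (Nat.zero_le j)) hjl R hR
      exact ⟨S, hS, hRS hx, hRS hy⟩

lemma saliency_lt_iff {G : SimpleGraph V} {P : ℕ → Set (Set V)} {l : ℕ}
    (href : ∀ i, 1 ≤ i → i ≤ l → Refines (P (i - 1)) (P i))
    (h0 : P 0 = {S | ∃ x : V, S = {x}})
    {a b : V} (hab : G.Adj a b) {lam : ℕ} (hlam : lam ≤ l) :
    saliency G P l s(a, b) < lam ↔ SameRegion (P lam) a b := by
  set T : Set ℕ := {mu | mu ≤ l ∧ s(a, b) ∈ cutOf G (P mu)} with hT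
  have hbdd : BddAbove T := ⟨l, fun mu hmu => hmu.1⟩
  have h0T : 0 ∈ T := by
    refine ⟨Nat.zero_le l, G.mem_edgeSet.mpr hab, ?_⟩
    intro x y hxy hsr
    obtain ⟨R, hR, hx, hy⟩ := hsr
    rw [h0] at hR
    obtain ⟨z, rfl⟩ := hR
    have hx' : x = z := hx
    have hy' : y = z := hy
    have hne : x ≠ y := by
      rcases Sym2.eq_iff.mp hxy with ⟨rfl, rfl⟩ | ⟨rfl, rfl⟩
      exacts [hab.ne, hab.ne']
    exact hne (hx'.trans hy'.symm)
  constructor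
  · intro hlt
    rw [← not_mem_cut_iff hab]
    intro hmem
    have : lam ≤ saliency G P l s(a, b) := le_csSup hbdd ⟨hlam, hmem⟩
    omega
  · intro hsr
    have hmem : sSup T ∈ T := Nat.sSup_mem ⟨0, h0T⟩ hbdd
    by_contra hge
    push_neg at hge
    have hle : lam ≤ sSup T := hge
    have : SameRegion (P (sSup T)) a b :=
      sameRegion_mono href hsr (sSup T) hle hmem.1
    exact (not_mem_cut_iff hab).mpr this hmem.2

lemma walk_rtg {G : SimpleGraph V} {P : Set (Set V)} {R : Set V} (hRP : R ∈ P)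
    {u v : R} (w : (G.induce R).Walk u v) :
    Relation.ReflTransGen (fun a b => G.Adj a b ∧ SameRegion P a b) u.val v.val := by
  induction w with
  | nil => exact Relation.ReflTransGen.refl
  | @cons x y z h p ih =>
    exact Relation.ReflTransGen.head ⟨h, ⟨R, hRP, x.2, y.2⟩⟩ ih

lemma class_eq_region {G : SimpleGraph V} {P : Set (Set V)}
    (hpart : Setoid.IsPartition P)
    (hconn : ∀ S ∈ P, (G.induce S).Connected)
    {x : V} {R : Set V} (hRP : R ∈ P) (hx : x ∈ R) :
    {y | Relation.ReflTransGen (fun a b => G.Adj a b ∧ SameRegion P a b) x y} = R := by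
  ext y
  simp only [Set.mem_setOf_eq]
  constructor
  · intro h
    induction h with
    | refl => exact hx
    | tail _ hbc ih =>
      obtain ⟨S, hS, hbS, hcS⟩ := hbc.2
      obtain ⟨T, ⟨_, _⟩, huniq⟩ := hpart.2 _
      have hRT : R = T := huniq R ⟨hRP, ih⟩
      have hST : S = T := huniq S ⟨hS, hbS⟩
      rw [hRT, ← hST]
      exact hcS
  · intro hy
    obtain ⟨wlk⟩ := ((hconn R hRP).preconnected ⟨x, hx⟩ ⟨y, hy⟩)
    exact walk_rtg hRP wlk

/-- `QFZ(G, Φ(H)) = H` for any connected complete hierarchy `H`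
of depth `|E|` on a finite connected graph. -/
theorem qfz_saliency_eq [Fintype V] (G : SimpleGraph V) [Fintype G.edgeSet]
    (hG : G.Connected) (P : ℕ → Set (Set V))
    (hP : IsConnectedHierarchy G P G.edgeFinset.card) :
    ∀ lam ≤ G.edgeFinset.card,
      qfz G (saliency G P G.edgeFinset.card) lam = P lam := by
  intro lam hlam
  obtain ⟨⟨hpart, href, h0, hl⟩, hconn⟩ := hP
  set l := G.edgeFinset.card with hldef
  have hpartl : Setoid.IsPartition (P lam) := hpart lam hlam
  have hconnl : ∀ S ∈ P lam, (G.induce S).Connected := hconn lam hlam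
  have rel_eq : (fun a b : V => G.Adj a b ∧ saliency G P l s(a, b) < lam)
      = (fun a b : V => G.Adj a b ∧ SameRegion (P lam) a b) := by
    funext a b
    apply propext
    constructor
    · rintro ⟨hab, hw⟩
      exact ⟨hab, (saliency_lt_iff href h0 hab hlam).mp hw⟩
    · rintro ⟨hab, hs⟩
      exact ⟨hab, (saliency_lt_iff href h0 hab hlam).mpr hs⟩
  ext S
  simp only [qfz, Set.mem_setOf_eq, rel_eq]
  constructor
  · rintro ⟨x, rfl⟩
    obtain ⟨R, ⟨hRP, hxR⟩, _⟩ := hpartl.2 x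
    rw [class_eq_region hpartl hconnl hRP hxR]
    exact hRP
  · intro hS
    have hne : S ≠ ∅ := fun h => hpartl.1 (h ▸ hS)
    obtain ⟨x, hx⟩ := Set.nonempty_iff_ne_empty.mpr hne
    exact ⟨x, (class_eq_region hpartl hconnl hS hx).symm⟩
end

section
/- Let G be a finite connected graph, H a connected complete hierarchy of depth |E| on V(G), and w : E → {0,…,|E|−1}. Then w is the saliency map of H if and only if (1) QFZ(G,w) = H, and (2) w is minimal with this property: for any w' ≤ w pointwise with QFZ(G,w') = H, one has w' = w. -/
open SimpleGraph

variable {V : Type*}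

/-!
The saliency map `φ` of a connected hierarchy `H` satisfies `φ(ab) < λ` exactly when `a` and `b`
lie in one region of `P_λ`; since the regions are connected, the quasi-flat zones of `φ` are `H`.
Conversely, if the quasi-flat zones of `w` are `H`, then `φ ≤ w` on edges, for an edge `ab` with
`w(ab) < φ(ab)` would put `a` and `b` into one zone at level `φ(ab)`, where `H` separates them.
So `φ` is the least map whose quasi-flat zones are `H`, which is both directions of the theorem.
-/

variable {G : SimpleGraph V}

def levelGraph (G : SimpleGraph V) (w : Sym2 V → ℕ) (lam : ℕ) : SimpleGraph V where
  Adj a b := G.Adj a b ∧ w s(a, b) < lam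
  symm := ⟨fun _ _ h => ⟨h.1.symm, by rw [Sym2.eq_swap]; exact h.2⟩⟩
  loopless := ⟨fun _ h => h.1.ne rfl⟩

@[simp]
lemma levelGraph_adj {w : Sym2 V → ℕ} {lam : ℕ} {a b : V} :
    (levelGraph G w lam).Adj a b ↔ G.Adj a b ∧ w s(a, b) < lam :=
  Iff.rfl

lemma qfz_eq_setOf_reachable (w : Sym2 V → ℕ) (lam : ℕ) :
    qfz G w lam = {S | ∃ x, S = {y | (levelGraph G w lam).Reachable x y}} := by
  simp only [qfz, reachable_iff_reflTransGen]
  exact rfl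

lemma sameRegion_qfz_iff {w : Sym2 V → ℕ} {lam : ℕ} {a b : V} :
    SameRegion (qfz G w lam) a b ↔ (levelGraph G w lam).Reachable a b := by
  rw [qfz_eq_setOf_reachable]
  constructor
  · rintro ⟨_, ⟨x, rfl⟩, hxa, hxb⟩
    exact (Set.mem_ofPred.mp hxa).symm.trans hxb
  · exact fun h => ⟨_, ⟨a, rfl⟩, Reachable.refl a, h⟩

lemma SameRegion.symm {Q : Set (Set V)} {x y : V} (h : SameRegion Q x y) : SameRegion Q y x :=
  let ⟨R, hR, hx, hy⟩ := h
  ⟨R, hR, hy, hx⟩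

lemma SameRegion.trans {Q : Set (Set V)} (hQ : Setoid.IsPartition Q) {x y z : V}
    (hxy : SameRegion Q x y) (hyz : SameRegion Q y z) : SameRegion Q x z := by
  obtain ⟨R, hR, hx, hy⟩ := hxy
  obtain ⟨S, hS, hy', hz⟩ := hyz
  obtain rfl := Setoid.eq_of_mem_eqv_class hQ.2 hR hy hS hy'
  exact ⟨R, hR, hx, hz⟩

lemma sameRegion_of_le {P : ℕ → Set (Set V)} {l : ℕ} (hP : IsCompleteHierarchy P l)
    {μ lam : ℕ} (hμ : μ ≤ lam) (hl : lam ≤ l) {x y : V}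
    (h : SameRegion (P μ) x y) : SameRegion (P lam) x y := by
  induction lam, hμ using Nat.le_induction with
  | base => exact h
  | succ n _ ih =>
    obtain ⟨R, hR, hx, hy⟩ := ih (by omega)
    obtain ⟨S, hS, hRS⟩ := hP.2.1 (n + 1) (by omega) hl R hR
    exact ⟨S, hS, hRS hx, hRS hy⟩

lemma mk_mem_cutOf_iff {Q : Set (Set V)} {a b : V} (hab : G.Adj a b) :
    s(a, b) ∈ cutOf G Q ↔ ¬ SameRegion Q a b := by
  refine ⟨fun h => h.2 a b rfl, fun h => ⟨hab, fun x y hxy hxy' => h ?_⟩⟩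
  rcases Sym2.eq_iff.mp hxy with ⟨rfl, rfl⟩ | ⟨rfl, rfl⟩
  exacts [hxy', hxy'.symm]

lemma reachable_levelGraph_iff_sameRegion {Q : Set (Set V)} (hQ : Setoid.IsPartition Q)
    (hconn : ∀ S ∈ Q, (G.induce S).Connected) {w : Sym2 V → ℕ} {lam : ℕ}
    (h : ∀ a b, G.Adj a b → (w s(a, b) < lam ↔ SameRegion Q a b)) (x y : V) :
    (levelGraph G w lam).Reachable x y ↔ SameRegion Q x y := by
  constructor
  · rintro ⟨p⟩
    induction p with
    | nil => obtain ⟨R, ⟨hR, hx⟩, -⟩ := hQ.2 _; exact ⟨R, hR, hx, hx⟩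
    | cons hadj _ ih =>
      rw [levelGraph_adj] at hadj
      exact ((h _ _ hadj.1).mp hadj.2).trans hQ ih
  · rintro ⟨R, hR, hx, hy⟩
    have hR' := (reachable_iff_reflTransGen _ _).mp
      ((hconn R hR).preconnected ⟨x, hx⟩ ⟨y, hy⟩)
    refine (reachable_iff_reflTransGen x y).mpr (hR'.lift Subtype.val fun u v huv => ?_)
    rw [comap_adj, Function.Embedding.subtype_apply, Function.Embedding.subtype_apply] at huv
    exact ⟨huv, (h _ _ huv).mpr ⟨R, hR, u.2, v.2⟩⟩

lemma qfz_eq_of_forall_adj {Q : Set (Set V)} (hQ : Setoid.IsPartition Q)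
    (hconn : ∀ S ∈ Q, (G.induce S).Connected) {w : Sym2 V → ℕ} {lam : ℕ}
    (h : ∀ a b, G.Adj a b → (w s(a, b) < lam ↔ SameRegion Q a b)) :
    qfz G w lam = Q := by
  have setOf_sameRegion : ∀ {x R}, R ∈ Q → x ∈ R → {y | SameRegion Q x y} = R :=
    fun hR hx => Set.ext fun y =>
      ⟨fun ⟨S, hS, hxS, hyS⟩ => Setoid.eq_of_mem_eqv_class hQ.2 hS hxS hR hx ▸ hyS,
        fun hy => ⟨_, hR, hx, hy⟩⟩
  simp_rw [qfz_eq_setOf_reachable, reachable_levelGraph_iff_sameRegion hQ hconn h]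
  ext S
  constructor
  · rintro ⟨x, rfl⟩
    obtain ⟨R, ⟨hR, hx⟩, -⟩ := hQ.2 x
    rwa [setOf_sameRegion hR hx]
  · intro hS
    obtain ⟨x, hx⟩ := Setoid.nonempty_of_mem_partition hQ hS
    exact ⟨x, (setOf_sameRegion hS hx).symm⟩

lemma saliency_le_and_mem_cutOf {P : ℕ → Set (Set V)} {l : ℕ} (hP : IsCompleteHierarchy P l)
    {a b : V} (hab : G.Adj a b) :
    saliency G P l s(a, b) ≤ l ∧ s(a, b) ∈ cutOf G (P (saliency G P l s(a, b))) := by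
  have hcut0 : s(a, b) ∈ cutOf G (P 0) := by
    rw [mk_mem_cutOf_iff hab, hP.2.2.1]
    rintro ⟨_, ⟨z, rfl⟩, ha, hb⟩
    exact hab.ne (ha.trans hb.symm)
  have hne : {lam | lam ≤ l ∧ s(a, b) ∈ cutOf G (P lam)}.Nonempty := ⟨0, Nat.zero_le l, hcut0⟩
  exact Nat.sSup_mem hne ⟨l, fun _ hn => hn.1⟩

lemma le_saliency {P : ℕ → Set (Set V)} {l lam : ℕ} {e : Sym2 V} (hlam : lam ≤ l)
    (hcut : e ∈ cutOf G (P lam)) : lam ≤ saliency G P l e :=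
  le_csSup ⟨l, fun _ hn => hn.1⟩ ⟨hlam, hcut⟩

lemma saliency_lt_iff_sameRegion {P : ℕ → Set (Set V)} {l lam : ℕ}
    (hP : IsCompleteHierarchy P l) (hlam : lam ≤ l) {a b : V} (hab : G.Adj a b) :
    saliency G P l s(a, b) < lam ↔ SameRegion (P lam) a b := by
  obtain ⟨hsl, hcut⟩ := saliency_le_and_mem_cutOf hP hab
  rw [mk_mem_cutOf_iff hab] at hcut
  constructor
  · intro hlt
    by_contra hdiff
    have := le_saliency hlam ((mk_mem_cutOf_iff hab).mpr hdiff)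
    omega
  · intro hsame
    by_contra! hle
    exact hcut (sameRegion_of_le hP hle hsl hsame)

lemma qfz_eq_of_eqOn_saliency {P : ℕ → Set (Set V)} {l : ℕ} (hP : IsConnectedHierarchy G P l)
    {w : Sym2 V → ℕ} (hw : ∀ e ∈ G.edgeSet, w e = saliency G P l e) {lam : ℕ} (hlam : lam ≤ l) :
    qfz G w lam = P lam :=
  qfz_eq_of_forall_adj (hP.1.1 lam hlam) (hP.2 lam hlam) fun a b hab => by
    rw [hw _ hab]
    exact saliency_lt_iff_sameRegion hP.1 hlam hab

/-- An edge lighter than its saliency would join its endpoints at the level where the hierarchy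
cuts it. -/
lemma saliency_le_of_qfz_eq {P : ℕ → Set (Set V)} {l : ℕ} (hP : IsCompleteHierarchy P l)
    {w : Sym2 V → ℕ} (hq : ∀ lam ≤ l, qfz G w lam = P lam) {e : Sym2 V} (he : e ∈ G.edgeSet) :
    saliency G P l e ≤ w e := by
  induction e using Sym2.ind with
  | _ a b =>
    obtain ⟨hsl, hcut⟩ := saliency_le_and_mem_cutOf hP he
    by_contra! hlt
    rw [mk_mem_cutOf_iff he, ← hq _ hsl, sameRegion_qfz_iff] at hcut
    exact hcut (Adj.reachable ⟨he, hlt⟩)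

theorem saliency_characterization_general (G : SimpleGraph V) [Fintype G.edgeSet]
    (P : ℕ → Set (Set V))
    (hP : IsConnectedHierarchy G P G.edgeFinset.card)
    (w : Sym2 V → ℕ) :
    (∀ e ∈ G.edgeSet, w e = saliency G P G.edgeFinset.card e) ↔
      ((∀ lam ≤ G.edgeFinset.card, qfz G w lam = P lam) ∧
        ∀ w' : Sym2 V → ℕ, (∀ e ∈ G.edgeSet, w' e ≤ w e) →
          (∀ lam ≤ G.edgeFinset.card, qfz G w' lam = P lam) →
          ∀ e ∈ G.edgeSet, w' e = w e) := by
  constructor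
  · intro hsal
    refine ⟨fun lam => qfz_eq_of_eqOn_saliency hP hsal, fun w' hle hq' e he => ?_⟩
    exact le_antisymm (hle e he) (hsal e he ▸ saliency_le_of_qfz_eq hP.1 hq' he)
  · rintro ⟨hq, hmin⟩ e he
    exact (hmin _ (fun e he => saliency_le_of_qfz_eq hP.1 hq he)
      (fun lam => qfz_eq_of_eqOn_saliency hP fun _ _ => rfl) e he).symm

/-- `w` is the saliency map of `H` iff `QFZ(G, w) = H` and `w` is
minimal with this property. -/
theorem saliency_characterization [Fintype V] (G : SimpleGraph V) [Fintype G.edgeSet]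
    (hG : G.Connected) (P : ℕ → Set (Set V))
    (hP : IsConnectedHierarchy G P G.edgeFinset.card)
    (w : Sym2 V → ℕ) (hw : ∀ e ∈ G.edgeSet, w e < G.edgeFinset.card) :
    (∀ e ∈ G.edgeSet, w e = saliency G P G.edgeFinset.card e) ↔
      ((∀ lam ≤ G.edgeFinset.card, qfz G w lam = P lam) ∧
        ∀ w' : Sym2 V → ℕ, (∀ e ∈ G.edgeSet, w' e ≤ w e) →
          (∀ lam ≤ G.edgeFinset.card, qfz G w' lam = P lam) →
          ∀ e ∈ G.edgeSet, w' e = w e) :=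
  saliency_characterization_general G P hP w
end

section
/- Let G be a finite connected graph. The operator Ψ(w) = Φ(QFZ(G,w)) on edge weight maps w : E → {0,…,|E|−1} is idempotent: Ψ(Ψ(w)) = Ψ(w). -/
open SimpleGraph

variable {V : Type*}

/-!
Write `Ψ w = saliency G (qfz G w) l`. For `lam ≤ l` and an edge `xy`, `lam ≤ Ψ w (xy)` holds
exactly when `x` and `y` are disconnected in the `lam`-level graph of `w`. Hence `Ψ w ≤ w` on
edges, and every edge of the `lam`-level graph of `Ψ w` joins vertices that are already connected
in the `lam`-level graph of `w`. So both level graphs have the same connected components, i.e.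
`QFZ(G, Ψ w)` and `QFZ(G, w)` agree up to level `l`, and applying `Φ` gives `Ψ (Ψ w) = Ψ w`.
-/

lemma saliency_le (G : SimpleGraph V) (P : ℕ → Set (Set V)) (l : ℕ) (e : Sym2 V) :
    saliency G P l e ≤ l :=
  csSup_le' fun _ h => h.1

lemma saliency_congr (G : SimpleGraph V) {P Q : ℕ → Set (Set V)} {l : ℕ}
    (h : ∀ lam ≤ l, P lam = Q lam) : saliency G P l = saliency G Q l := by
  funext e
  simp only [saliency]
  congr 1
  ext lam
  exact and_congr_right fun hlam => by rw [h lam hlam]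

namespace SimpleGraph

lemma Reachable.of_forall_adj_reachable {G H : SimpleGraph V}
    (h : ∀ a b, G.Adj a b → H.Reachable a b) {u v : V} (huv : G.Reachable u v) :
    H.Reachable u v := by
  rw [reachable_iff_reflTransGen] at huv ⊢
  exact Relation.reflTransGen_closed
    (fun a b hab => (reachable_iff_reflTransGen a b).1 (h a b hab)) u v huv

def levelGraph (G : SimpleGraph V) (w : Sym2 V → ℕ) (lam : ℕ) : SimpleGraph V where
  Adj a b := G.Adj a b ∧ w s(a, b) < lam
  symm := ⟨fun _ _ h => ⟨h.1.symm, Sym2.eq_swap ▸ h.2⟩⟩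
  loopless := ⟨fun a h => G.loopless.irrefl a h.1⟩

variable {G : SimpleGraph V} {w : Sym2 V → ℕ}

@[simp]
lemma levelGraph_adj {lam : ℕ} {a b : V} :
    (G.levelGraph w lam).Adj a b ↔ G.Adj a b ∧ w s(a, b) < lam :=
  Iff.rfl

lemma levelGraph_zero : G.levelGraph w 0 = ⊥ := by
  ext a b
  simp

lemma levelGraph_mono : Monotone (G.levelGraph w) :=
  fun _ _ h _ _ hab => levelGraph_adj.2 ⟨hab.1, hab.2.trans_le h⟩

lemma qfz_eq_setOf_reachable (lam : ℕ) :
    qfz G w lam = {S | ∃ x, S = {y | (G.levelGraph w lam).Reachable x y}} := by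
  simp only [reachable_iff_reflTransGen]
  rfl

lemma sameRegion_qfz_iff {lam : ℕ} {x y : V} :
    SameRegion (qfz G w lam) x y ↔ (G.levelGraph w lam).Reachable x y := by
  rw [qfz_eq_setOf_reachable]
  constructor
  · rintro ⟨_, ⟨z, rfl⟩, hx, hy⟩
    exact hx.symm.trans hy
  · exact fun h => ⟨_, ⟨x, rfl⟩, Reachable.refl x, h⟩

lemma mk_mem_cutOf_qfz_iff {lam : ℕ} {x y : V} (hxy : G.Adj x y) :
    s(x, y) ∈ cutOf G (qfz G w lam) ↔ ¬ (G.levelGraph w lam).Reachable x y := by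
  simp only [cutOf, Set.mem_ofPred_eq, sameRegion_qfz_iff]
  constructor
  · exact fun h => h.2 x y rfl
  · refine fun h => ⟨hxy, fun a b hab hr => h ?_⟩
    rcases Sym2.eq_iff.1 hab with ⟨rfl, rfl⟩ | ⟨rfl, rfl⟩
    exacts [hr, hr.symm]

lemma le_saliency_qfz_iff {l lam : ℕ} (hlam : lam ≤ l) {x y : V} (hxy : G.Adj x y) :
    lam ≤ saliency G (qfz G w) l s(x, y) ↔ ¬ (G.levelGraph w lam).Reachable x y := by
  set S := {mu | mu ≤ l ∧ ¬ (G.levelGraph w mu).Reachable x y}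
  have hsal : saliency G (qfz G w) l s(x, y) = sSup S := by
    simp only [saliency, mk_mem_cutOf_qfz_iff hxy, S]
  have hbdd : BddAbove S := ⟨l, fun _ h => h.1⟩
  have hzero : 0 ∈ S := ⟨Nat.zero_le l, by rw [levelGraph_zero, reachable_bot]; exact hxy.ne⟩
  rw [hsal]
  constructor
  · exact fun h hr => (Nat.sSup_mem ⟨0, hzero⟩ hbdd).2 (hr.mono (levelGraph_mono h))
  · exact fun h => le_csSup hbdd ⟨hlam, h⟩

lemma saliency_qfz_le {l : ℕ} {x y : V} (hxy : G.Adj x y) :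
    saliency G (qfz G w) l s(x, y) ≤ w s(x, y) := by
  by_contra! h
  exact (le_saliency_qfz_iff (saliency_le G _ l _) hxy).1 le_rfl
    (Adj.reachable (levelGraph_adj.2 ⟨hxy, h⟩))

lemma reachable_levelGraph_saliency_qfz_iff {l lam : ℕ} (hlam : lam ≤ l) {x y : V} :
    (G.levelGraph (saliency G (qfz G w) l) lam).Reachable x y ↔
      (G.levelGraph w lam).Reachable x y := by
  constructor
  · refine Reachable.of_forall_adj_reachable fun a b hab => ?_
    obtain ⟨hab, hlt⟩ := levelGraph_adj.1 hab
    by_contra hr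
    exact hlt.not_ge ((le_saliency_qfz_iff hlam hab).2 hr)
  · refine Reachable.mono fun a b hab => ?_
    obtain ⟨hab, hlt⟩ := levelGraph_adj.1 hab
    exact levelGraph_adj.2 ⟨hab, (saliency_qfz_le hab).trans_lt hlt⟩

lemma qfz_saliency_qfz {l lam : ℕ} (hlam : lam ≤ l) :
    qfz G (saliency G (qfz G w) l) lam = qfz G w lam := by
  simp only [qfz_eq_setOf_reachable, reachable_levelGraph_saliency_qfz_iff hlam]

end SimpleGraph

theorem saliency_operator_idempotent_general (G : SimpleGraph V)
    [Fintype G.edgeSet] (w : Sym2 V → ℕ) :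
    ∀ e ∈ G.edgeSet,
      saliency G (qfz G (saliency G (qfz G w) G.edgeFinset.card)) G.edgeFinset.card e =
        saliency G (qfz G w) G.edgeFinset.card e :=
  fun e _ => congrFun (saliency_congr G fun _ hlam => qfz_saliency_qfz hlam) e

/-- the operator `Ψ = Φ ∘ QFZ(G, ·)` is idempotent. -/
theorem saliency_operator_idempotent [Fintype V] (G : SimpleGraph V)
    [Fintype G.edgeSet] (hG : G.Connected) (w : Sym2 V → ℕ)
    (hw : ∀ e ∈ G.edgeSet, w e < G.edgeFinset.card) :
    ∀ e ∈ G.edgeSet,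
      saliency G (qfz G (saliency G (qfz G w) G.edgeFinset.card)) G.edgeFinset.card e =
        saliency G (qfz G w) G.edgeFinset.card e :=
  saliency_operator_idempotent_general G w
end

section
/- Let (G,w) be a finite connected edge-weighted graph. A subgraph X of G is a minimum spanning tree of (G,w) if and only if (1) the quasi-flat zones hierarchy of X for w equals that of G, and (2) X is minimal for this property: every subgraph Y of X whose quasi-flat zones hierarchy for w equals that of G satisfies Y = X. -/
open SimpleGraph

variable {V : Type*}

/-!
Both sides of the equivalence single out the subgraph `kruskalSubgraph G w` of edges whose
endpoints are not joined by strictly lighter edges. Equality of all level partitions with those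
of `G` says exactly that `X` spans and joins the endpoints of every edge `xy` of `G` by a path of
edges of weight at most `w xy` (`HasMinimaxPaths`). The Kruskal subgraph has this property, and
by injectivity of `w` it lies in every spanning subgraph with it. A minimum spanning tree has it
by the exchange argument, and contains no other edge since such an edge could be deleted.
-/

open Relation

theorem Relation.ReflTransGen.exists_crossing {α : Type*} {r : α → α → Prop} {S : Set α}
    {x y : α} (h : ReflTransGen r x y) (hx : x ∈ S) (hy : y ∉ S) :
    ∃ a b, a ∈ S ∧ b ∉ S ∧ r a b ∧
      ReflTransGen (fun p q => r p q ∧ p ∉ S ∧ q ∉ S) b y := by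
  induction h with
  | refl => exact absurd hx hy
  | @tail b c _ hbc ih =>
    by_cases hb : b ∈ S
    · exact ⟨b, c, hb, hy, hbc, .refl⟩
    · obtain ⟨a, b', ha, hb', hab, hb'y⟩ := ih hb
      exact ⟨a, b', ha, hb', hab, hb'y.tail ⟨hbc, hb, hy⟩⟩

namespace SimpleGraph.Subgraph

variable {G : SimpleGraph V}

instance (X : G.Subgraph) : Std.Symm X.Adj := X.symm

theorem reachable_coe_of_reflTransGen {X : G.Subgraph} {u v : V} (h : ReflTransGen X.Adj u v)
    (hu : u ∈ X.verts) (hv : v ∈ X.verts) : X.coe.Reachable ⟨u, hu⟩ ⟨v, hv⟩ := by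
  induction h with
  | refl => rfl
  | @tail b c _ hbc ih => exact (ih hbc.fst_mem).trans (Adj.reachable hbc)

theorem Connected.reflTransGen {X : G.Subgraph} (hX : X.Connected) {u v : V}
    (hu : u ∈ X.verts) (hv : v ∈ X.verts) : ReflTransGen X.Adj u v := by
  have h := (reachable_iff_reflTransGen _ _).mp (hX ⟨u, hu⟩ ⟨v, hv⟩)
  exact h.lift' Subtype.val fun a b hab => .single hab

theorem Connected.of_adj_reflTransGen {X Y : G.Subgraph} (hX : X.Connected)
    (hverts : Y.verts = X.verts) (h : ∀ a b, X.Adj a b → ReflTransGen Y.Adj a b) :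
    Y.Connected := by
  refine Subgraph.connected_iff.mpr ⟨⟨fun ⟨u, hu⟩ ⟨v, hv⟩ =>
    reachable_coe_of_reflTransGen ?_ hu hv⟩, hverts ▸ hX.nonempty⟩
  exact (hX.reflTransGen (hverts ▸ hu) (hverts ▸ hv)).lift' id h

theorem Connected.of_deleteEdges_le {X Y : G.Subgraph} {a b : V} (hX : X.Connected)
    (hle : X.deleteEdges {s(a, b)} ≤ Y) (hverts : Y.verts = X.verts)
    (hab : ReflTransGen Y.Adj a b) : Y.Connected := by
  refine hX.of_adj_reflTransGen hverts fun p q hpq => ?_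
  by_cases he : s(p, q) = s(a, b)
  · rcases Sym2.eq_iff.mp he with ⟨rfl, rfl⟩ | ⟨rfl, rfl⟩
    exacts [hab, _root_.symm hab]
  · exact .single (hle.2 ((deleteEdges_adj ..).mpr ⟨hpq, he⟩))

theorem sgWeight_eq_add_of_edgeSet_eq_insert [Fintype V] {α : Type*} [AddCommMonoid α]
    {X Y : G.Subgraph} {e : Sym2 V} (w : Sym2 V → α) (he : e ∉ X.edgeSet)
    (hY : Y.edgeSet = insert e X.edgeSet) : sgWeight Y w = w e + sgWeight X w := by
  classical
  rw [sgWeight, sgWeight, ← Finset.sum_insert (by simpa using he)]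
  exact Finset.sum_congr (by ext; simp [hY]) fun _ _ => rfl

theorem edgeSet_deleteEdges (X : G.Subgraph) (s : Set (Sym2 V)) :
    (X.deleteEdges s).edgeSet = X.edgeSet \ s := by
  ext e
  induction e using Sym2.ind
  simp

theorem sgWeight_deleteEdges [Fintype V] {α : Type*} [AddCommMonoid α] {X : G.Subgraph}
    {x y : V} (w : Sym2 V → α) (hxy : X.Adj x y) :
    sgWeight X w = w s(x, y) + sgWeight (X.deleteEdges {s(x, y)}) w :=
  sgWeight_eq_add_of_edgeSet_eq_insert w (by simp [edgeSet_deleteEdges]) (by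
    rw [edgeSet_deleteEdges, Set.insert_sdiff_singleton,
      Set.insert_eq_of_mem (X.mem_edgeSet.mpr hxy)])

theorem sgWeight_sup_subgraphOfAdj [Fintype V] {α : Type*} [AddCommMonoid α] {X : G.Subgraph}
    {x y : V} (w : Sym2 V → α) (hxy : G.Adj x y) (hX : s(x, y) ∉ X.edgeSet) :
    sgWeight (X ⊔ G.subgraphOfAdj hxy) w = w s(x, y) + sgWeight X w :=
  sgWeight_eq_add_of_edgeSet_eq_insert w hX (by simp [Set.union_singleton])

def levelAdj (X : G.Subgraph) (w : Sym2 V → ℕ) (lam : ℕ) (a b : V) : Prop :=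
  X.Adj a b ∧ w s(a, b) < lam

variable {X Y : G.Subgraph} {w : Sym2 V → ℕ} {lam : ℕ}

instance : Std.Symm (X.levelAdj w lam) where
  symm _ _ h := ⟨h.1.symm, by rw [Sym2.eq_swap]; exact h.2⟩

theorem levelAdj_mono {lam' : ℕ} (hXY : X ≤ Y) (hlam : lam ≤ lam') :
    X.levelAdj w lam ≤ Y.levelAdj w lam' :=
  fun _ _ h => ⟨hXY.2 h.1, h.2.trans_le hlam⟩

theorem levelPartition_eq :
    levelPartition X w lam =
      {S | ∃ x ∈ X.verts, S = {y | ReflTransGen (X.levelAdj w lam) x y}} :=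
  rfl

theorem levelPartition_eq_top_iff :
    levelPartition X w lam = levelPartition (⊤ : G.Subgraph) w lam ↔ X.verts = Set.univ ∧
      ∀ x y, ReflTransGen ((⊤ : G.Subgraph).levelAdj w lam) x y →
        ReflTransGen (X.levelAdj w lam) x y := by
  have hle (x y : V) : ReflTransGen (X.levelAdj w lam) x y →
      ReflTransGen ((⊤ : G.Subgraph).levelAdj w lam) x y :=
    ReflTransGen.mono (levelAdj_mono le_top le_rfl) x y
  rw [levelPartition_eq, levelPartition_eq]
  constructor
  · intro h
    have hclass (v : V) : ∃ z ∈ X.verts, ∀ y,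
        ReflTransGen ((⊤ : G.Subgraph).levelAdj w lam) v y ↔
          ReflTransGen (X.levelAdj w lam) z y := by
      obtain ⟨z, hz, hvz⟩ : {y | ReflTransGen ((⊤ : G.Subgraph).levelAdj w lam) v y} ∈
          {S | ∃ x ∈ X.verts, S = {y | ReflTransGen (X.levelAdj w lam) x y}} :=
        h ▸ ⟨v, trivial, rfl⟩
      exact ⟨z, hz, fun y => Set.ext_iff.mp hvz y⟩
    have hverts : X.verts = Set.univ := Set.eq_univ_of_forall fun v => by
      obtain ⟨z, hz, hzv⟩ := hclass v
      rcases ((hzv v).mp .refl).cases_tail with rfl | ⟨_, _, hv⟩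
      exacts [hz, hv.1.snd_mem]
    refine ⟨hverts, fun x y hxy => ?_⟩
    obtain ⟨z, -, hzx⟩ := hclass x
    exact (_root_.symm ((hzx x).mp .refl)).trans ((hzx y).mp hxy)
  · rintro ⟨hverts, hX⟩
    have hclass (x : V) : {y | ReflTransGen (X.levelAdj w lam) x y} =
        {y | ReflTransGen ((⊤ : G.Subgraph).levelAdj w lam) x y} :=
      Set.ext fun y => ⟨hle x y, hX x y⟩
    simp only [hclass, hverts, verts_top]

def HasMinimaxPaths (X : G.Subgraph) (w : Sym2 V → ℕ) : Prop :=
  ∀ ⦃x y⦄, G.Adj x y → ReflTransGen (X.levelAdj w (w s(x, y) + 1)) x y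

theorem HasMinimaxPaths.reflTransGen_levelAdj (hX : X.HasMinimaxPaths w) {x y : V}
    (hxy : ReflTransGen ((⊤ : G.Subgraph).levelAdj w lam) x y) :
    ReflTransGen (X.levelAdj w lam) x y :=
  hxy.lift' id fun _ _ h =>
    ReflTransGen.mono (levelAdj_mono le_rfl h.2) _ _ (hX (by simpa using h.1))

theorem forall_levelPartition_eq_top_iff :
    (∀ lam, levelPartition X w lam = levelPartition (⊤ : G.Subgraph) w lam) ↔
      X.verts = Set.univ ∧ X.HasMinimaxPaths w := by
  refine ⟨fun h => ⟨(levelPartition_eq_top_iff.mp (h 0)).1, fun x y hxy => ?_⟩,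
    fun h lam => levelPartition_eq_top_iff.mpr ⟨h.1, fun _ _ => h.2.reflTransGen_levelAdj⟩⟩
  exact (levelPartition_eq_top_iff.mp (h _)).2 x y (.single ⟨by simpa using hxy, by omega⟩)

end SimpleGraph.Subgraph

namespace SimpleGraph

variable {G : SimpleGraph V} {w : Sym2 V → ℕ}

open Subgraph

def kruskalSubgraph (G : SimpleGraph V) (w : Sym2 V → ℕ) : G.Subgraph where
  verts := Set.univ
  Adj x y := G.Adj x y ∧ ¬ ReflTransGen ((⊤ : G.Subgraph).levelAdj w (w s(x, y))) x y
  adj_sub h := h.1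
  edge_vert _ := Set.mem_univ _
  symm := ⟨fun _ _ h =>
    ⟨h.1.symm, by rw [Sym2.eq_swap]; exact fun h' => h.2 (_root_.symm h')⟩⟩

theorem kruskalSubgraph_hasMinimaxPaths (G : SimpleGraph V) (w : Sym2 V → ℕ) :
    (kruskalSubgraph G w).HasMinimaxPaths w := by
  intro x y hxy
  induction hn : w s(x, y) using Nat.strong_induction_on generalizing x y with
  | _ n ih =>
    by_cases hK : (kruskalSubgraph G w).Adj x y
    · exact .single ⟨hK, by omega⟩
    · have hpath : ReflTransGen ((⊤ : G.Subgraph).levelAdj w n) x y :=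
        hn ▸ not_not.mp fun h => hK ⟨hxy, h⟩
      refine hpath.lift' id fun a b hab => ?_
      exact ReflTransGen.mono (levelAdj_mono le_rfl (Nat.succ_le_succ hab.2.le)) _ _
        (ih _ hab.2 (by simpa using hab.1) rfl)

theorem kruskalSubgraph_le (hinj : Set.InjOn w G.edgeSet) {Y : G.Subgraph}
    (hY : Y.verts = Set.univ) (hYm : Y.HasMinimaxPaths w) : kruskalSubgraph G w ≤ Y := by
  refine ⟨hY ▸ le_rfl, fun x y ⟨hxy, hnot⟩ => ?_⟩
  by_contra hYxy
  refine hnot ((hYm hxy).lift' id fun a b hab => .single ⟨by simpa using Y.adj_sub hab.1, ?_⟩)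
  refine (Nat.lt_succ_iff.mp hab.2).lt_of_ne fun heq => hYxy ?_
  rcases Sym2.eq_iff.mp (hinj (Y.adj_sub hab.1) hxy heq) with ⟨rfl, rfl⟩ | ⟨rfl, rfl⟩
  exacts [hab.1, hab.1.symm]

end SimpleGraph

section MinimumSpanningTree

variable [Fintype V] {G : SimpleGraph V}

open Subgraph

theorem exists_isMST {α : Type*} [AddCommMonoid α] [LinearOrder α] [WellFoundedLT α]
    (hG : G.Connected) (w : Sym2 V → α) : ∃ X : G.Subgraph, IsMST X w := by
  obtain ⟨X, ⟨hXv, hXc⟩, hmin⟩ := (InvImage.wf (sgWeight · w) wellFounded_lt).has_min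
    {X : G.Subgraph | X.verts = Set.univ ∧ X.Connected} ⟨⊤, rfl, hG.toSubgraph le_rfl⟩
  exact ⟨X, hXv, hXc, fun Y hYv hYc => not_lt.mp (hmin Y ⟨hYv, hYc⟩)⟩

variable {w : Sym2 V → ℕ} {X : G.Subgraph}

theorem IsMST.hasMinimaxPaths (hX : IsMST X w) : X.HasMinimaxPaths w := by
  obtain ⟨hv, hc, hmin⟩ := hX
  intro x y hxy
  by_cases hXxy : X.Adj x y
  · exact .single ⟨hXxy, Nat.lt_succ_self _⟩
  by_contra hxy_not
  -- An `X`-path from `x` to `y` leaves the level class `S` of `x` through an edge `ab` heavier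
  -- than `xy`; exchanging `ab` for `xy` yields a lighter connected spanning subgraph.
  set S := {v | ReflTransGen (X.levelAdj w (w s(x, y) + 1)) x v}
  obtain ⟨a, b, haS, hbS, hab, hby⟩ := (hc.reflTransGen (hv ▸ trivial : x ∈ X.verts)
    (hv ▸ trivial)).exists_crossing (S := S) .refl hxy_not
  have hwab : w s(x, y) < w s(a, b) :=
    not_le.mp fun hle => hbS (haS.tail ⟨hab, Nat.lt_succ_of_le hle⟩)
  set Y := X.deleteEdges {s(a, b)} ⊔ G.subgraphOfAdj hxy
  have hkeep (p q : V) (hpq : X.Adj p q) (hne : s(p, q) ≠ s(a, b)) : Y.Adj p q :=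
    Or.inl ((Subgraph.deleteEdges_adj ..).mpr ⟨hpq, hne⟩)
  have hxa : ReflTransGen Y.Adj x a := haS.lift' id fun p q hpq =>
    .single (hkeep p q hpq.1 fun he => by have := hpq.2; rw [he] at this; omega)
  have hby' : ReflTransGen Y.Adj b y := hby.lift' id fun p q hpq =>
    .single (hkeep p q hpq.1 fun he => by
      rcases Sym2.eq_iff.mp he with ⟨rfl, -⟩ | ⟨-, rfl⟩
      exacts [hpq.2.1 haS, hpq.2.2 haS])
  have hYv : Y.verts = Set.univ := by simp [Y, hv]
  have hYxy : Y.Adj x y := Or.inr (subgraphOfAdj_adj_self hxy)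
  have hYc : Y.Connected := hc.of_deleteEdges_le le_sup_left (by rw [hYv, hv])
    ((_root_.symm hxa).trans ((ReflTransGen.single hYxy).trans (_root_.symm hby')))
  have hYw : sgWeight Y w = w s(x, y) + sgWeight (X.deleteEdges {s(a, b)}) w :=
    sgWeight_sup_subgraphOfAdj w hxy (by simp [Subgraph.edgeSet_deleteEdges, hXxy])
  have hXw := sgWeight_deleteEdges w hab
  have := hmin Y hYv hYc
  omega

theorem IsMST.le_kruskalSubgraph (hX : IsMST X w) : X ≤ kruskalSubgraph G w := by
  refine ⟨Set.subset_univ _, fun x y hXxy => ⟨X.adj_sub hXxy, fun hpath => ?_⟩⟩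
  have hXpath := hX.hasMinimaxPaths.reflTransGen_levelAdj hpath
  have hpos : 0 < w s(x, y) := by
    rcases hXpath.cases_tail with h | ⟨_, _, hstep⟩
    exacts [absurd h.symm (X.adj_sub hXxy).ne, Nat.zero_lt_of_lt hstep.2]
  set Y := X.deleteEdges {s(x, y)}
  have hYxy : ReflTransGen Y.Adj x y := hXpath.lift' id fun p q hpq =>
    .single ((Subgraph.deleteEdges_adj ..).mpr ⟨hpq.1, fun he => by
      have he' : s(p, q) = s(x, y) := he
      exact (he' ▸ hpq.2).false⟩)
  have hXw : sgWeight X w = w s(x, y) + sgWeight Y w := sgWeight_deleteEdges w hXxy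
  have := hX.2.2 Y (by simp [Y, hX.1]) (hX.2.1.of_deleteEdges_le le_rfl rfl hYxy)
  omega

theorem IsMST.eq_kruskalSubgraph (hinj : Set.InjOn w G.edgeSet) (hX : IsMST X w) :
    X = kruskalSubgraph G w :=
  le_antisymm hX.le_kruskalSubgraph (kruskalSubgraph_le hinj hX.1 hX.hasMinimaxPaths)

theorem isMST_kruskalSubgraph (hG : G.Connected) (hinj : Set.InjOn w G.edgeSet) :
    IsMST (kruskalSubgraph G w) w := by
  obtain ⟨X, hX⟩ := exists_isMST hG w
  rwa [← hX.eq_kruskalSubgraph hinj]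

end MinimumSpanningTree

theorem mst_iff_minimal_qfz_general [Fintype V] (G : SimpleGraph V)
    (hG : G.Connected) (w : Sym2 V → ℕ) (hinj : Set.InjOn w G.edgeSet)
    (X : G.Subgraph) :
    IsMST X w ↔
      ((∀ lam : ℕ, levelPartition X w lam = levelPartition (⊤ : G.Subgraph) w lam) ∧
        ∀ Y : G.Subgraph, Y ≤ X →
          (∀ lam : ℕ, levelPartition Y w lam = levelPartition (⊤ : G.Subgraph) w lam) →
          Y = X) := by
  have hK : ∀ lam, levelPartition (kruskalSubgraph G w) w lam = levelPartition ⊤ w lam :=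
    Subgraph.forall_levelPartition_eq_top_iff.mpr ⟨rfl, kruskalSubgraph_hasMinimaxPaths G w⟩
  constructor
  · intro hX
    obtain rfl := hX.eq_kruskalSubgraph hinj
    refine ⟨hK, fun Y hYX hY => le_antisymm hYX ?_⟩
    obtain ⟨hYv, hYm⟩ := Subgraph.forall_levelPartition_eq_top_iff.mp hY
    exact kruskalSubgraph_le hinj hYv hYm
  · rintro ⟨hX, hminimal⟩
    obtain ⟨hXv, hXm⟩ := Subgraph.forall_levelPartition_eq_top_iff.mp hX
    rw [← hminimal _ (kruskalSubgraph_le hinj hXv hXm) hK]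
    exact isMST_kruskalSubgraph hG hinj

/-- `X` is a MST of `(G, w)` iff its quasi-flat zones hierarchy
equals that of `G` and `X` is minimal (for the subgraph order) with this property. -/
theorem mst_iff_minimal_qfz [Fintype V] (G : SimpleGraph V) [Fintype G.edgeSet]
    (hG : G.Connected) (w : Sym2 V → ℕ) (hinj : Set.InjOn w G.edgeSet)
    (hw : ∀ e ∈ G.edgeSet, w e < G.edgeFinset.card) (X : G.Subgraph) :
    IsMST X w ↔
      ((∀ lam : ℕ, levelPartition X w lam = levelPartition (⊤ : G.Subgraph) w lam) ∧
        ∀ Y : G.Subgraph, Y ≤ X →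
          (∀ lam : ℕ, levelPartition Y w lam = levelPartition (⊤ : G.Subgraph) w lam) →
          Y = X) :=
  mst_iff_minimal_qfz_general G hG w hinj X
end
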